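/- arXiv:math/0511004 — 6 statements merged into one kernel-verified Lean document; each statement's English description precedes it below -/
import Mathlib

section
/- Let k ≥ 2 and m ≥ 1 be natural numbers, and let n be the least positive integer such that n * C(n, k-1) ≥ m. Then (n - k + 1)^k < (k-1)! * m. -/
/-- if `n` is the least positive integer with `n * C(n, k-1) ≥ m`,
then `(n - k + 1)^k < (k-1)! * m`. -/
theorem stmt1 (k m n : ℕ) (hk : 2 ≤ k) (hm : 1 ≤ m) (hn : 0 < n)
    (h1 : m ≤ n * n.choose (k - 1))
    (hmin : ∀ n' : ℕ, 0 < n' → m ≤ n' * n'.choose (k - 1) → n ≤ n') :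
    ((n : ℤ) - (k : ℤ) + 1) ^ k < ((k - 1).factorial : ℤ) * (m : ℤ) := by
  rcases lt_or_ge n k with hnk | hnk
  · -- n ≤ k - 1, in fact n = k - 1
    have hnk' : n = k - 1 := by
      by_contra h
      have hlt : n < k - 1 := by omega
      rw [Nat.choose_eq_zero_of_lt hlt, Nat.mul_zero] at h1
      omega
    have hz : (n : ℤ) - (k : ℤ) + 1 = 0 := by omega
    rw [hz, zero_pow (by omega : k ≠ 0)]
    have : (0:ℤ) < ((k-1).factorial : ℤ) := by exact_mod_cast (k-1).factorial_pos
    have : (0:ℤ) < (m:ℤ) := by exact_mod_cast hm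
    positivity
  · -- n ≥ k
    have h2 : ¬ m ≤ (n - 1) * (n - 1).choose (k - 1) := by
      intro h
      have := hmin (n - 1) (by omega) h
      omega
    have h3 : (n - 1) * (n - 1).choose (k - 1) + 1 ≤ m := by omega
    have h4 : (n - k + 1) ^ (k - 1) ≤ (n - 1).descFactorial (k - 1) := by
      have h := Nat.pow_sub_le_descFactorial (n - 1) (k - 1)
      have e : n - 1 + 1 - (k - 1) = n - k + 1 := by omega
      rwa [e] at h
    have h5 : (n - 1).descFactorial (k - 1)
        = (k - 1).factorial * (n - 1).choose (k - 1) :=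
      Nat.descFactorial_eq_factorial_mul_choose _ _
    have h6 : (n - k + 1) ^ k < (k - 1).factorial * m := by
      calc (n - k + 1) ^ k = (n - k + 1) * (n - k + 1) ^ (k - 1) := by
            rw [← pow_succ']
            congr 1
            omega
        _ ≤ (n - 1) * ((k - 1).factorial * (n - 1).choose (k - 1)) :=
            Nat.mul_le_mul (by omega) (h5 ▸ h4)
        _ < (k - 1).factorial * ((n - 1) * (n - 1).choose (k - 1) + 1) := by
            have hf : 1 ≤ (k - 1).factorial := (k - 1).factorial_pos
            nlinarith [Nat.mul_le_mul_left ((n-1) * (n-1).choose (k-1)) hf]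
        _ ≤ (k - 1).factorial * m := Nat.mul_le_mul_left _ h3
    have hcast : (n : ℤ) - (k : ℤ) + 1 = ((n - k + 1 : ℕ) : ℤ) := by omega
    rw [hcast]
    exact_mod_cast h6
end

section
/- Let k ≥ 2 and m ≥ 1 be natural numbers, and let n be the least positive integer such that n * C(n, k-1) ≥ m. Then n < k * m^(1/k) + k. -/
/-- if `n` is the least positive integer with `n * C(n, k-1) ≥ m`,
then `n < k * m^(1/k) + k`. -/
theorem stmt2 (k m n : ℕ) (hk : 2 ≤ k) (hm : 1 ≤ m) (hn : 0 < n)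
    (h1 : m ≤ n * n.choose (k - 1))
    (hmin : ∀ n' : ℕ, 0 < n' → m ≤ n' * n'.choose (k - 1) → n ≤ n') :
    (n : ℝ) < (k : ℝ) * (m : ℝ) ^ ((1 : ℝ) / (k : ℝ)) + (k : ℝ) := by
  have hk0 : (0:ℝ) < k := by positivity
  have hm1 : (1:ℝ) ≤ (m:ℝ) ^ ((1:ℝ)/(k:ℝ)) :=
    Real.one_le_rpow (by exact_mod_cast hm) (by positivity)
  by_cases hnk : n ≤ k
  · have hnr : (n:ℝ) ≤ k := by exact_mod_cast hnk
    nlinarith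
  · push_neg at hnk
    -- minimality: (n-1) fails
    have h2 : (n-1) * (n-1).choose (k-1) < m := by
      by_contra h
      push_neg at h
      have := hmin (n-1) (by omega) h
      omega
    -- (n-k+1)^k ≤ (k-1).factorial * ((n-1) * C(n-1,k-1))
    have hdesc : (n - k + 1)^(k-1) ≤ (n-1).descFactorial (k-1) := by
      have := Nat.pow_sub_le_descFactorial (n-1) (k-1)
      have he : n - 1 + 1 - (k-1) = n - k + 1 := by omega
      rwa [he] at this
    have hkey : (n - k + 1)^k ≤ (k-1).factorial * ((n-1) * (n-1).choose (k-1)) := by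
      have hpow : (n - k + 1)^k = (n - k + 1) * (n - k + 1)^(k-1) := by
        rw [← pow_succ']
        congr 1
        omega
      rw [hpow, Nat.descFactorial_eq_factorial_mul_choose] at *
      calc (n - k + 1) * (n - k + 1)^(k-1)
          ≤ (n-1) * ((k-1).factorial * (n-1).choose (k-1)) :=
            Nat.mul_le_mul (by omega) hdesc
        _ = (k-1).factorial * ((n-1) * (n-1).choose (k-1)) := by ring
    have hlt : (n - k + 1)^k < (k-1).factorial * m :=
      lt_of_le_of_lt hkey ((Nat.mul_lt_mul_left (Nat.factorial_pos _)).mpr h2)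
    have hfact : (k-1).factorial ≤ k^k := by
      calc (k-1).factorial ≤ (k-1)^(k-1) := Nat.factorial_le_pow _
        _ ≤ k^(k-1) := Nat.pow_le_pow_left (by omega) _
        _ ≤ k^k := Nat.pow_le_pow_right (by omega) (by omega)
    have hlt2 : (n - k + 1)^k < k^k * m :=
      lt_of_lt_of_le hlt (Nat.mul_le_mul_right _ hfact)
    -- move to ℝ
    have hR : (((n - k + 1 : ℕ)):ℝ)^k < ((k:ℝ) * (m:ℝ) ^ ((1:ℝ)/(k:ℝ)))^k := by
      have hb : ((k:ℝ) * (m:ℝ) ^ ((1:ℝ)/(k:ℝ)))^k = (k:ℝ)^k * (m:ℝ) := by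
        rw [mul_pow, ← Real.rpow_natCast ((m:ℝ) ^ ((1:ℝ)/(k:ℝ))) k,
          ← Real.rpow_mul (by positivity), one_div,
          inv_mul_cancel₀ (by positivity), Real.rpow_one]
      rw [hb]
      exact_mod_cast hlt2
    have hroot : (((n - k + 1 : ℕ)):ℝ) < (k:ℝ) * (m:ℝ) ^ ((1:ℝ)/(k:ℝ)) :=
      lt_of_pow_lt_pow_left₀ k (by positivity) hR
    have hcast : (((n - k + 1 : ℕ)):ℝ) = (n:ℝ) - (k:ℝ) + 1 := by
      have : (n - k + 1 : ℕ) = n - k + 1 := rfl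
      push_cast [Nat.cast_sub hnk.le]
      ring
    rw [hcast] at hroot
    linarith
end

section
/- In the group G presented by ⟨b, t, s | t⁻¹ b s = b³, s⁻¹ b t = b³⟩, for every natural number m one has t⁻ᵐ b sᵐ = b^(3^m) in G. -/
/-- The relators of `⟨b, t, s ∣ t⁻¹ b s = b³, s⁻¹ b t = b³⟩`;
generator `0` is `b`, generator `1` is `t`, generator `2` is `s`. -/
def rels6 : Set (FreeGroup (Fin 3)) :=
  { (FreeGroup.of 1)⁻¹ * FreeGroup.of 0 * FreeGroup.of 2 * ((FreeGroup.of 0) ^ 3)⁻¹,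
    (FreeGroup.of 2)⁻¹ * FreeGroup.of 0 * FreeGroup.of 1 * ((FreeGroup.of 0) ^ 3)⁻¹ }

/-!
Multiplying the two relations gives `t⁻¹ b² t = b⁶`, so conjugation by `t` sends `b^(2n)` to
`b^(6n)`; splitting off one more relation `t⁻¹ b s = b³` yields `t⁻¹ bᵏ s = b^(3k)` for every odd
`k`. Since `3^m` is odd, induction on `m` gives `t⁻ᵐ b sᵐ = b^(3^m)`, in any group where the two
relations hold.
-/

section

variable {G : Type*} [Group G] {b t s : G}

theorem inv_mul_sq_mul_eq_pow_six (h₁ : t⁻¹ * b * s = b ^ 3) (h₂ : s⁻¹ * b * t = b ^ 3) :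
    t⁻¹ * b ^ 2 * t = b ^ 6 :=
  calc t⁻¹ * b ^ 2 * t = (t⁻¹ * b * s) * (s⁻¹ * b * t) := by rw [sq]; group
    _ = b ^ 6 := by rw [h₁, h₂, ← pow_add]

theorem inv_mul_pow_mul_eq_pow_three_mul (h₁ : t⁻¹ * b * s = b ^ 3)
    (h₂ : s⁻¹ * b * t = b ^ 3) {k : ℕ} (hk : Odd k) : t⁻¹ * b ^ k * s = b ^ (3 * k) := by
  obtain ⟨n, rfl⟩ := hk
  calc t⁻¹ * b ^ (2 * n + 1) * s = (t⁻¹ * b ^ 2 * t⁻¹⁻¹) ^ n * (t⁻¹ * b * s) := by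
        rw [conj_pow, ← pow_mul]; group
    _ = b ^ (3 * (2 * n + 1)) := by
        rw [inv_inv, inv_mul_sq_mul_eq_pow_six h₁ h₂, h₁, ← pow_mul, ← pow_add]; ring_nf

theorem inv_pow_mul_mul_pow_eq_pow_three_pow (h₁ : t⁻¹ * b * s = b ^ 3)
    (h₂ : s⁻¹ * b * t = b ^ 3) (m : ℕ) : (t ^ m)⁻¹ * b * s ^ m = b ^ 3 ^ m := by
  induction m with
  | zero => simp
  | succ m ih =>
    calc (t ^ (m + 1))⁻¹ * b * s ^ (m + 1) = t⁻¹ * ((t ^ m)⁻¹ * b * s ^ m) * s := by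
          rw [pow_succ, pow_succ]; group
      _ = b ^ 3 ^ (m + 1) := by
          rw [ih, inv_mul_pow_mul_eq_pow_three_mul h₁ h₂ (Odd.pow (by decide)), pow_succ',
            mul_comm]

end

/-- in `G = ⟨b, t, s ∣ t⁻¹ b s = b³, s⁻¹ b t = b³⟩` one has
`t⁻ᵐ b sᵐ = b^(3^m)` for every natural number `m`. -/
theorem stmt6 (m : ℕ) :
    ((PresentedGroup.of 1 : PresentedGroup rels6) ^ m)⁻¹ * PresentedGroup.of 0 *
        (PresentedGroup.of 2 : PresentedGroup rels6) ^ m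
      = (PresentedGroup.of 0 : PresentedGroup rels6) ^ (3 ^ m) := by
  refine inv_pow_mul_mul_pow_eq_pow_three_pow ?_ ?_ m <;> rw [← mul_inv_eq_one]
  · exact PresentedGroup.one_of_mem (Or.inl rfl)
  · exact PresentedGroup.one_of_mem (Or.inr rfl)
end

section
/- Let Θ_k = ℤ^k ⋊ F₂ where F₂ = ⟨f, g⟩ acts on ℤ^k = ⟨s₁, …, s_k⟩ by: f fixes s_k and sends s_i to s_i s_{i+1} for i < k; g fixes s_{k-1} and s_k and sends s_i to s_i s_{i+1} for i < k-1. Suppose u₀ is a word in the generators s₁, …, s_k, f, g (and inverses) representing s_k^m in Θ_k, and let c = (ℓ_f(u₀) + ℓ_g(u₀))/2 where ℓ_x counts occurrences of x^{±1}. Then |m| ≤ ∑_{i=1}^{k} C(c + k - 1 - i, c - 1) · ℓ_{s_i}(u₀). -/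
/-- Generators of `Θ_k`: `Sum.inl i` is `s_{i+1}`, `Sum.inr true` is `f`,
`Sum.inr false` is `g`. -/
abbrev Gen12 (k : ℕ) := Fin k ⊕ Bool

namespace Stmt12

variable {k : ℕ}

def S (i : Fin k) : FreeGroup (Gen12 k) := FreeGroup.of (Sum.inl i)

def F : FreeGroup (Gen12 k) := FreeGroup.of (Sum.inr true)

def G : FreeGroup (Gen12 k) := FreeGroup.of (Sum.inr false)

/-- `f⁻¹ s_i f`: equal to `s_i s_{i+1}` for `i < k` and to `s_k` for `i = k`. -/
def fTar (i : Fin k) : FreeGroup (Gen12 k) :=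
  if h : (i : ℕ) + 1 < k then S i * S ⟨(i : ℕ) + 1, h⟩ else S i

/-- `g⁻¹ s_i g`: equal to `s_i s_{i+1}` for `i < k - 1` and to `s_{k-1}`, `s_k`
for the last two generators. -/
def gTar (i : Fin k) : FreeGroup (Gen12 k) :=
  if h : (i : ℕ) + 2 < k then S i * S ⟨(i : ℕ) + 1, by omega⟩ else S i

/-- The defining relators of `Θ_k = ℤᵏ ⋊ F₂`. -/
def rels (k : ℕ) : Set (FreeGroup (Gen12 k)) :=
  {x | (∃ i j : Fin k, i ≠ j ∧ x = S i * S j * (S i)⁻¹ * (S j)⁻¹)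
    ∨ (∃ i : Fin k, x = F⁻¹ * S i * F * (fTar i)⁻¹)
    ∨ (∃ i : Fin k, x = G⁻¹ * S i * G * (gTar i)⁻¹)}

/-- Number of occurrences of the letter `x^{±1}` in the word `u₀`. -/
def occ (u₀ : List (Gen12 k × Bool)) (x : Gen12 k) : ℕ :=
  (u₀.filter fun p => decide (p.1 = x)).length

/-- Evaluation of a word (a list of signed letters) in `Θ_k`. -/
noncomputable def eval (u₀ : List (Gen12 k × Bool)) : PresentedGroup (rels k) :=
  (u₀.map fun p =>
    if p.2 then (PresentedGroup.of p.1 : PresentedGroup (rels k))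
    else (PresentedGroup.of p.1)⁻¹).prod

end Stmt12



open Multiplicative

namespace St12Aux

variable {k : ℕ}

abbrev V (k : ℕ) := Fin k → ℤ

/-- Lower shift endomorphism restricted to coordinates satisfying `P`. -/
def Esh (P : ℕ → Prop) [DecidablePred P] : AddMonoid.End (V k) where
  toFun v j := if h : 1 ≤ (j : ℕ) ∧ P (j : ℕ) then v ⟨(j : ℕ) - 1, by have := j.isLt; omega⟩ else 0
  map_zero' := by funext j; by_cases h : 1 ≤ (j : ℕ) ∧ P (j : ℕ) <;> simp [h]
  map_add' v w := by
    funext j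
    by_cases h : 1 ≤ (j : ℕ) ∧ P (j : ℕ) <;> simp [h]

variable (P : ℕ → Prop) [DecidablePred P]

lemma Esh_apply (v : V k) (j : Fin k) :
    Esh P v j = if h : 1 ≤ (j : ℕ) ∧ P (j : ℕ)
      then v ⟨(j : ℕ) - 1, by have := j.isLt; omega⟩ else 0 := rfl

lemma Esh_pow_apply (t : ℕ) (v : V k) (j : Fin k) (h : (j : ℕ) < t) :
    ((Esh P ^ t) v) j = 0 := by
  induction t generalizing v j with
  | zero => omega
  | succ t ih =>
    rw [pow_succ']
    show (Esh P (((Esh P ^ t)) v)) j = 0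
    rw [Esh_apply]
    split
    · exact ih _ _ (show (j:ℕ)-1 < t by omega)
    · rfl

lemma Esh_nilp : IsNilpotent (Esh P : AddMonoid.End (V k)) := by
  refine ⟨k, AddMonoidHom.ext fun v => funext fun j => ?_⟩
  exact Esh_pow_apply P k v j j.isLt

/-- `1 + Esh P` as a unit of the endomorphism ring. -/
noncomputable def U : (AddMonoid.End (V k))ˣ :=
  (IsNilpotent.isUnit_one_add (Esh_nilp P)).unit

lemma U_val : ((U P : (AddMonoid.End (V k))ˣ) : AddMonoid.End (V k)) = 1 + Esh P :=
  IsUnit.unit_spec _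

/-- `1 + Esh P` as an additive automorphism. -/
noncomputable def autOf : V k ≃+ V k where
  toFun := ((U P : (AddMonoid.End (V k))ˣ) : AddMonoid.End (V k))
  invFun := (((U P)⁻¹ : (AddMonoid.End (V k))ˣ) : AddMonoid.End (V k))
  left_inv v := by
    show ((((U P)⁻¹ : (AddMonoid.End (V k))ˣ) : AddMonoid.End (V k))
      * ((U P : (AddMonoid.End (V k))ˣ) : AddMonoid.End (V k))) v = v
    rw [← Units.val_mul, inv_mul_cancel]; rfl
  right_inv v := by
    show (((U P : (AddMonoid.End (V k))ˣ) : AddMonoid.End (V k))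
      * (((U P)⁻¹ : (AddMonoid.End (V k))ˣ) : AddMonoid.End (V k))) v = v
    rw [← Units.val_mul, mul_inv_cancel]; rfl
  map_add' := map_add _


/-! ### Entrywise bounds -/

/-- Sum of `|v t|` over `t ≤ j`. -/
def asum (v : V k) (j : Fin k) : ℤ :=
  ∑ t : Fin k, if (t : ℕ) ≤ (j : ℕ) then |v t| else 0

lemma asum_nonneg (v : V k) (j : Fin k) : 0 ≤ asum v j :=
  Finset.sum_nonneg fun t _ => by split <;> simp [abs_nonneg]

lemma asum_term_le (v : V k) (t j : Fin k) (h : (t : ℕ) ≤ (j : ℕ)) :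
    |v t| ≤ asum v j := by
  rw [show |v t| = if (t : ℕ) ≤ (j : ℕ) then |v t| else 0 from (if_pos h).symm]
  exact Finset.single_le_sum
    (fun (t' : Fin k) _ => show (0:ℤ) ≤ if (t' : ℕ) ≤ (j : ℕ) then |v t'| else 0 by
      split <;> simp [abs_nonneg])
    (Finset.mem_univ t)

lemma asum_succ (v : V k) (j j' : Fin k) (h : (j' : ℕ) + 1 = (j : ℕ)) :
    asum v j = asum v j' + |v j| := by
  have key : ∀ t : Fin k, (if (t : ℕ) ≤ (j : ℕ) then |v t| else 0)
      = (if (t : ℕ) ≤ (j' : ℕ) then |v t| else 0) + (if t = j then |v t| else 0) := by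
    intro t
    have ht : (t = j) ↔ (t : ℕ) = (j : ℕ) := Fin.ext_iff
    by_cases h2 : t = j
    · rw [if_pos h2, if_pos (by omega : (t:ℕ) ≤ (j:ℕ)), if_neg (by rw [ht] at h2; omega)]
      ring
    · rw [if_neg h2]
      rw [ht] at h2
      by_cases h1 : (t : ℕ) ≤ (j' : ℕ)
      · rw [if_pos h1, if_pos (by omega)]; ring
      · rw [if_neg h1, if_neg (by omega)]; ring
  unfold asum
  rw [Finset.sum_congr rfl fun t _ => key t, Finset.sum_add_distrib,
    Finset.sum_ite_eq' Finset.univ j fun t => |v t|, if_pos (Finset.mem_univ j)]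

lemma step_direct (v : V k) (j : Fin k) :
    |((1 + Esh P : AddMonoid.End (V k)) v) j| ≤ asum v j := by
  have h1 : ((1 + Esh P : AddMonoid.End (V k)) v) j = v j + Esh P v j := rfl
  rw [h1, Esh_apply]
  split
  · rename_i h
    calc |v j + v ⟨(j:ℕ)-1, by have := j.isLt; omega⟩|
        ≤ |v ⟨(j:ℕ)-1, by have := j.isLt; omega⟩| + |v j| := by
          rw [add_comm (v j)]; exact abs_add_le _ _
      _ ≤ asum v j := by
          rw [asum_succ v j ⟨(j:ℕ)-1, by have := j.isLt; omega⟩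
            (show (j:ℕ) - 1 + 1 = (j:ℕ) by omega)]
          have := asum_term_le v ⟨(j:ℕ)-1, by have := j.isLt; omega⟩
            ⟨(j:ℕ)-1, by have := j.isLt; omega⟩ le_rfl
          omega
  · rw [add_zero]; exact asum_term_le v j j le_rfl

lemma step_inv (v : V k) (j : Fin k) :
    |((((U P)⁻¹ : (AddMonoid.End (V k))ˣ) : AddMonoid.End (V k)) v) j| ≤ asum v j := by
  set w : V k := (((U P)⁻¹ : (AddMonoid.End (V k))ˣ) : AddMonoid.End (V k)) v with hw
  have hv : v = w + Esh P w := by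
    have : ((U P : (AddMonoid.End (V k))ˣ) : AddMonoid.End (V k)) w = v := by
      rw [hw]
      show (((U P : (AddMonoid.End (V k))ˣ) : AddMonoid.End (V k))
        * (((U P)⁻¹ : (AddMonoid.End (V k))ˣ) : AddMonoid.End (V k))) v = v
      rw [← Units.val_mul, mul_inv_cancel]; rfl
    rw [← this, U_val]; rfl
  have hcoord : ∀ j : Fin k, w j = v j - Esh P w j := by
    intro j'
    have : v j' = w j' + Esh P w j' := by rw [hv]; rfl
    omega
  suffices h : ∀ n (hn : n < k), |w ⟨n, hn⟩| ≤ asum v ⟨n, hn⟩ by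
    have := h (j : ℕ) j.isLt
    simpa using this
  intro n
  induction n using Nat.strong_induction_on with
  | _ n ih =>
    intro hn
    rw [hcoord ⟨n, hn⟩, Esh_apply]
    split
    · rename_i hcond
      have hc1 : 1 ≤ n := hcond.1
      have h1 : n - 1 < n := by omega
      calc |v ⟨n, hn⟩ - w ⟨n-1, by omega⟩|
          ≤ |w ⟨n-1, by omega⟩| + |v ⟨n, hn⟩| := by
            rw [sub_eq_add_neg, add_comm]
            refine le_trans (abs_add_le _ _) ?_
            rw [abs_neg]
        _ ≤ asum v ⟨n-1, by omega⟩ + |v ⟨n, hn⟩| := by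
            have := ih (n-1) h1 (by omega)
            omega
        _ = asum v ⟨n, hn⟩ := (asum_succ v ⟨n, hn⟩ ⟨n-1, by omega⟩
            (show n - 1 + 1 = n by omega)).symm
    · rw [sub_zero]
      exact asum_term_le v ⟨n, hn⟩ ⟨n, hn⟩ le_rfl

/-! ### The binomial bound function -/

/-- Bound on the `(j,i)` entry of a product of `n` shift-type unipotent matrices. -/
def bndN (n i j : ℕ) : ℕ := if i ≤ j then (j - i + n - 1).choose (j - i) else 0

lemma bndN_mono {n n' : ℕ} (h : n ≤ n') (i j : ℕ) : bndN n i j ≤ bndN n' i j := by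
  unfold bndN
  split
  · rename_i hij
    rcases Nat.eq_or_lt_of_le hij with h' | h'
    · subst h'; simp
    · exact Nat.choose_le_choose _ (by omega)
  · exact le_rfl

lemma bndN_diag (n i : ℕ) : bndN n i i = 1 := by
  simp [bndN]

lemma bndN_sum_step (n i : ℕ) : ∀ J, (∑ t ∈ Finset.range (J + 1), bndN n i t) ≤ bndN (n + 1) i J := by
  intro J
  induction J with
  | zero =>
    rw [Finset.sum_range_one]
    exact bndN_mono (by omega) i 0
  | succ J ihJ =>
    rw [Finset.sum_range_succ]
    by_cases hij : i ≤ J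
    · have h1 : bndN n i (J + 1) ≤ (J - i + n).choose (J - i + 1) := by
        unfold bndN
        rw [if_pos (by omega), show J + 1 - i = J - i + 1 by omega]
        exact Nat.choose_le_choose _ (by omega)
      have h2 : bndN (n + 1) i J = (J - i + n).choose (J - i) := by
        unfold bndN; rw [if_pos hij]; congr 1 <;> omega
      have h3 : bndN (n + 1) i (J + 1) = (J - i + n + 1).choose (J - i + 1) := by
        unfold bndN; rw [if_pos (by omega)]
        congr 1 <;> omega
      have pascal : (J - i + n + 1).choose (J - i + 1)
          = (J - i + n).choose (J - i) + (J - i + n).choose (J - i + 1) :=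
        Nat.choose_succ_succ _ _
      omega
    · by_cases hij1 : i = J + 1
      · subst hij1
        have hz : (∑ t ∈ Finset.range (J + 1), bndN n (J+1) t) = 0 := by
          apply Finset.sum_eq_zero
          intro t ht
          simp only [Finset.mem_range] at ht
          unfold bndN
          rw [if_neg (by omega)]
        rw [hz, bndN_diag, bndN_diag]
      · have hz1 : (∑ t ∈ Finset.range (J + 1), bndN n i t) = 0 := by
          apply Finset.sum_eq_zero
          intro t ht
          simp only [Finset.mem_range] at ht
          unfold bndN
          rw [if_neg (by omega)]
        have hz2 : bndN n i (J + 1) = 0 := by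
          unfold bndN; rw [if_neg (by omega)]
        rw [hz1, hz2]
        exact Nat.zero_le _


/-! ### The action of the free group on two generators -/

/-- Predicate for the shift associated to the generator `b`: `f = true` shifts
everywhere, `g = false` shifts only below the last coordinate. -/
def Pb (k : ℕ) (b : Bool) : ℕ → Prop := fun n => if b then True else n + 1 < k

instance (b : Bool) : DecidablePred (Pb k b) := fun n => by
  unfold Pb
  cases b <;> simp <;> infer_instance

lemma Pb_true (n : ℕ) : Pb k true n := trivial

lemma Pb_false_iff (n : ℕ) : Pb k false n ↔ n + 1 < k := by
  unfold Pb
  simp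

/-- The action `Φ` of `F₂` used to build `Θ_k`; the generator `b` acts so that
its inverse acts by `1 + Esh (Pb k b)`. -/
noncomputable def Phi : FreeGroup Bool →* MulAut (Multiplicative (V k)) :=
  FreeGroup.lift fun b => (AddEquiv.toMultiplicative (autOf (Pb k b)))⁻¹

/-- The additive incarnation of the action of `w`. -/
noncomputable def act (w : FreeGroup Bool) (v : V k) : V k :=
  Multiplicative.toAdd (Phi w (Multiplicative.ofAdd v))

lemma act_one (v : V k) : act 1 v = v := by
  unfold act
  rw [map_one]
  rfl

lemma act_comp (w β : FreeGroup Bool) (v : V k) : act w (act β v) = act (w * β) v := by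
  unfold act
  rw [map_mul]
  rfl

lemma act_add (w : FreeGroup Bool) (v v' : V k) : act w (v + v') = act w v + act w v' := by
  unfold act
  rw [show Multiplicative.ofAdd (v + v') = Multiplicative.ofAdd v * Multiplicative.ofAdd v' from rfl,
    map_mul]
  rfl

lemma act_zero (w : FreeGroup Bool) : act w (0 : V k) = 0 := by
  have h := act_add w (0 : V k) 0
  rw [add_zero] at h
  funext j
  have h2 := congrFun h j
  simp only [Pi.add_apply] at h2
  show act w 0 j = 0
  omega

lemma act_neg (w : FreeGroup Bool) (v : V k) : act w (-v) = -act w v := by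
  have h := act_add w v (-v)
  rw [add_neg_cancel, act_zero] at h
  funext j
  have h2 := congrFun h j
  simp only [Pi.add_apply, Pi.zero_apply] at h2
  show act w (-v) j = -(act w v j)
  omega

lemma act_of (b : Bool) (v : V k) :
    act (FreeGroup.of b) v
      = (((U (Pb k b))⁻¹ : (AddMonoid.End (V k))ˣ) : AddMonoid.End (V k)) v := by
  unfold act Phi
  rw [FreeGroup.lift_apply_of]
  rfl

lemma act_of_inv (b : Bool) (v : V k) :
    act (FreeGroup.of b)⁻¹ v = (1 + Esh (Pb k b) : AddMonoid.End (V k)) v := by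
  unfold act Phi
  rw [map_inv, FreeGroup.lift_apply_of, inv_inv]
  show (autOf (Pb k b)) v = _
  rw [show ((autOf (Pb k b)) v : V k)
    = ((U (Pb k b) : (AddMonoid.End (V k))ˣ) : AddMonoid.End (V k)) v from rfl, U_val]

lemma act_letter_bound (x : Bool × Bool) (v : V k) (j : Fin k) :
    |act (FreeGroup.mk [x]) v j| ≤ asum v j := by
  rcases x with ⟨b, ε⟩
  cases ε
  · have h1 : FreeGroup.mk [(b, false)] = (FreeGroup.of b)⁻¹ := by
      rw [show FreeGroup.of b = FreeGroup.mk [(b, true)] from rfl, FreeGroup.inv_mk]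
      rfl
    rw [h1, act_of_inv]
    exact step_direct _ v j
  · rw [show FreeGroup.mk [(b, true)] = FreeGroup.of b from rfl, act_of]
    exact step_inv _ v j


/-- Entry bound for the action of a word of length `n` on a basis vector. -/
lemma act_word_bound : ∀ (L : List (Bool × Bool)) (i : Fin k) (j : Fin k),
    |act (FreeGroup.mk L) (Pi.single i 1) j| ≤ (bndN L.length (i:ℕ) (j:ℕ) : ℤ) := by
  intro L
  induction L with
  | nil =>
    intro i j
    rw [show FreeGroup.mk ([] : List (Bool × Bool)) = 1 from rfl, act_one]
    simp only [List.length_nil]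
    rw [Pi.single_apply]
    by_cases h : j = i
    · rw [if_pos h]
      have : bndN 0 (i:ℕ) (j:ℕ) = 1 := by rw [h]; exact bndN_diag 0 i
      rw [this]
      simp
    · rw [if_neg h]
      simp
  | cons x L ih =>
    intro i j
    have hmk : FreeGroup.mk (x :: L) = FreeGroup.mk [x] * FreeGroup.mk L := by
      rw [FreeGroup.mul_mk]
      rfl
    rw [hmk, ← act_comp]
    refine le_trans (act_letter_bound x _ j) ?_
    unfold asum
    have step : ∀ t : Fin k, (if (t:ℕ) ≤ (j:ℕ) then |act (FreeGroup.mk L) (Pi.single i 1) t| else 0)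
        ≤ (if (t:ℕ) ≤ (j:ℕ) then (bndN L.length (i:ℕ) (t:ℕ) : ℤ) else 0) := by
      intro t
      split
      · exact ih i t
      · exact le_rfl
    refine le_trans (Finset.sum_le_sum fun t _ => step t) ?_
    have cast1 : (∑ t : Fin k, if (t:ℕ) ≤ (j:ℕ) then (bndN L.length (i:ℕ) (t:ℕ) : ℤ) else 0)
        = ((∑ t : Fin k, if (t:ℕ) ≤ (j:ℕ) then bndN L.length (i:ℕ) (t:ℕ) else 0 : ℕ) : ℤ) := by
      push_cast
      rfl
    rw [cast1]
    have : (∑ t : Fin k, if (t:ℕ) ≤ (j:ℕ) then bndN L.length (i:ℕ) (t:ℕ) else 0)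
        ≤ bndN (L.length + 1) (i:ℕ) (j:ℕ) := by
      have hre : (∑ t : Fin k, if (t:ℕ) ≤ (j:ℕ) then bndN L.length (i:ℕ) (t:ℕ) else 0)
          = ∑ t ∈ Finset.range k, (if t ≤ (j:ℕ) then bndN L.length (i:ℕ) t else 0) :=
        Fin.sum_univ_eq_sum_range (fun n => if n ≤ (j:ℕ) then bndN L.length (i:ℕ) n else 0) k
      rw [hre]
      have hsub : (∑ t ∈ Finset.range k, (if t ≤ (j:ℕ) then bndN L.length (i:ℕ) t else 0))
          = ∑ t ∈ Finset.range ((j:ℕ) + 1), (if t ≤ (j:ℕ) then bndN L.length (i:ℕ) t else 0) := by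
        refine (Finset.sum_subset ?_ ?_).symm
        · intro t ht
          simp only [Finset.mem_range] at *
          have := j.isLt
          omega
        · intro t _ ht
          simp only [Finset.mem_range] at ht
          rw [if_neg (by omega)]
      rw [hsub]
      have heq : (∑ t ∈ Finset.range ((j:ℕ) + 1), (if t ≤ (j:ℕ) then bndN L.length (i:ℕ) t else 0))
          = ∑ t ∈ Finset.range ((j:ℕ) + 1), bndN L.length (i:ℕ) t := by
        refine Finset.sum_congr rfl fun t ht => ?_
        simp only [Finset.mem_range] at ht
        rw [if_pos (by omega)]
      rw [heq]
      have := bndN_sum_step L.length (i:ℕ) (j:ℕ)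
      simpa using this
    calc ((∑ t : Fin k, if (t:ℕ) ≤ (j:ℕ) then bndN L.length (i:ℕ) (t:ℕ) else 0 : ℕ) : ℤ)
        ≤ (bndN (L.length + 1) (i:ℕ) (j:ℕ) : ℤ) := by exact_mod_cast this
      _ = (bndN (x :: L).length (i:ℕ) (j:ℕ) : ℤ) := by rw [List.length_cons]

end St12Aux

namespace St12Aux
open Stmt12 Multiplicative

variable {k : ℕ}

/-- The concrete model `ℤᵏ ⋊ F₂`. -/
noncomputable abbrev Hgrp (k : ℕ) :=
  SemidirectProduct (Multiplicative (V k)) (FreeGroup Bool) Phi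

/-- Images of the generators in the concrete model. -/
noncomputable def gens : Gen12 k → Hgrp k
  | Sum.inl i => SemidirectProduct.inl (Multiplicative.ofAdd (Pi.single i 1))
  | Sum.inr b => SemidirectProduct.inr (FreeGroup.of b)

lemma Esh_single (P : ℕ → Prop) [DecidablePred P] (i : Fin k) :
    Esh P (Pi.single i (1:ℤ)) = if h : (i:ℕ) + 1 < k ∧ P ((i:ℕ)+1)
      then Pi.single (⟨(i:ℕ)+1, h.1⟩ : Fin k) (1:ℤ) else 0 := by
  funext j
  rw [Esh_apply]
  by_cases hR : (i:ℕ) + 1 < k ∧ P ((i:ℕ)+1)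
  · rw [dif_pos hR]
    by_cases hji : (j:ℕ) = (i:ℕ) + 1
    · rw [dif_pos (⟨by omega, by rw [hji]; exact hR.2⟩ : 1 ≤ (j:ℕ) ∧ P (j:ℕ))]
      have h1 : (⟨(j:ℕ)-1, by have := j.isLt; omega⟩ : Fin k) = i :=
        Fin.ext (show (j:ℕ)-1 = (i:ℕ) by omega)
      have h2 : j = (⟨(i:ℕ)+1, hR.1⟩ : Fin k) := Fin.ext (show (j:ℕ) = (i:ℕ)+1 from hji)
      rw [h1, h2, Pi.single_eq_same, Pi.single_eq_same]
    · have h2 : j ≠ (⟨(i:ℕ)+1, hR.1⟩ : Fin k) := fun h => hji (by rw [h])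
      rw [Pi.single_eq_of_ne h2]
      by_cases hj : 1 ≤ (j:ℕ) ∧ P (j:ℕ)
      · rw [dif_pos hj]
        have h1 : (⟨(j:ℕ)-1, by have := j.isLt; omega⟩ : Fin k) ≠ i := by
          intro h
          have hv : (j:ℕ) - 1 = (i:ℕ) := congrArg Fin.val h
          omega
        exact Pi.single_eq_of_ne h1 _
      · rw [dif_neg hj]
  · rw [dif_neg hR]
    show _ = (0 : ℤ)
    by_cases hj : 1 ≤ (j:ℕ) ∧ P (j:ℕ)
    · rw [dif_pos hj]
      have h1 : (⟨(j:ℕ)-1, by have := j.isLt; omega⟩ : Fin k) ≠ i := by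
        intro h
        have hv : (j:ℕ) - 1 = (i:ℕ) := congrArg Fin.val h
        exact hR ⟨by omega, by rw [show (i:ℕ)+1 = (j:ℕ) by omega]; exact hj.2⟩
      exact Pi.single_eq_of_ne h1 _
    · rw [dif_neg hj]

lemma Phi_inv_apply (b : Bool) (v : V k) :
    (Phi (FreeGroup.of b))⁻¹ (Multiplicative.ofAdd v)
      = Multiplicative.ofAdd ((1 + Esh (Pb k b) : AddMonoid.End (V k)) v) := by
  have h := act_of_inv b v
  unfold act at h
  rw [map_inv] at h
  rw [← h, ofAdd_toAdd]

lemma gens_inl (i : Fin k) :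
    gens (Sum.inl i) = SemidirectProduct.inl (Multiplicative.ofAdd (Pi.single i 1)) := rfl

lemma gens_inr (b : Bool) :
    gens (k := k) (Sum.inr b) = SemidirectProduct.inr (FreeGroup.of b) := rfl

lemma rels_check : ∀ r ∈ rels k, FreeGroup.lift (gens (k := k)) r = 1 := by
  intro r hr
  rcases hr with ⟨i, j, _hij, rfl⟩ | ⟨i, rfl⟩ | ⟨i, rfl⟩
  · simp only [map_mul, map_inv, S, FreeGroup.lift_apply_of, gens_inl]
    have hc : (SemidirectProduct.inl (ofAdd (Pi.single i (1:ℤ))) : Hgrp k)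
          * SemidirectProduct.inl (ofAdd (Pi.single j 1))
        = SemidirectProduct.inl (ofAdd (Pi.single j 1))
          * SemidirectProduct.inl (ofAdd (Pi.single i 1)) := by
      rw [← map_mul, mul_comm, map_mul]
    rw [hc]
    group
  · -- f relation
    simp only [map_mul, map_inv, S, F, FreeGroup.lift_apply_of, gens_inl, gens_inr]
    have e3 : ((SemidirectProduct.inr (FreeGroup.of true) : Hgrp k))⁻¹
          * SemidirectProduct.inl (Multiplicative.ofAdd (Pi.single i 1))
          * SemidirectProduct.inr (FreeGroup.of true)
        = SemidirectProduct.inl ((Phi (FreeGroup.of true))⁻¹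
            (Multiplicative.ofAdd (Pi.single i 1))) := by
      rw [← map_inv]
      exact (SemidirectProduct.inl_aut_inv (FreeGroup.of true)
        (Multiplicative.ofAdd (Pi.single i 1))).symm
    rw [e3, Phi_inv_apply, mul_inv_eq_one]
    have hE : (1 + Esh (Pb k true) : AddMonoid.End (V k)) (Pi.single i 1)
        = Pi.single i 1 + Esh (Pb k true) (Pi.single i 1) := rfl
    rw [hE, Esh_single]
    unfold fTar
    by_cases h : (i:ℕ) + 1 < k
    · rw [dif_pos h, dif_pos (⟨h, Pb_true _⟩ : (i:ℕ)+1 < k ∧ Pb k true ((i:ℕ)+1))]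
      rw [map_mul]
      unfold S
      rw [FreeGroup.lift_apply_of, FreeGroup.lift_apply_of, gens_inl, gens_inl, ← map_mul]
      rfl
    · rw [dif_neg h, dif_neg (fun hc => h hc.1), add_zero]
      unfold S
      first
      | rfl
      | (rw [FreeGroup.lift_apply_of, gens_inl])
  · -- g relation
    simp only [map_mul, map_inv, S, G, FreeGroup.lift_apply_of, gens_inl, gens_inr]
    have e3 : ((SemidirectProduct.inr (FreeGroup.of false) : Hgrp k))⁻¹
          * SemidirectProduct.inl (Multiplicative.ofAdd (Pi.single i 1))
          * SemidirectProduct.inr (FreeGroup.of false)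
        = SemidirectProduct.inl ((Phi (FreeGroup.of false))⁻¹
            (Multiplicative.ofAdd (Pi.single i 1))) := by
      rw [← map_inv]
      exact (SemidirectProduct.inl_aut_inv (FreeGroup.of false)
        (Multiplicative.ofAdd (Pi.single i 1))).symm
    rw [e3, Phi_inv_apply, mul_inv_eq_one]
    have hE : (1 + Esh (Pb k false) : AddMonoid.End (V k)) (Pi.single i 1)
        = Pi.single i 1 + Esh (Pb k false) (Pi.single i 1) := rfl
    rw [hE, Esh_single]
    unfold gTar
    by_cases h : (i:ℕ) + 2 < k
    · rw [dif_pos h, dif_pos (show (i:ℕ) + 1 < k ∧ Pb k false ((i:ℕ)+1) from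
        ⟨by omega, (Pb_false_iff _).mpr (by omega)⟩)]
      rw [map_mul]
      unfold S
      rw [FreeGroup.lift_apply_of, FreeGroup.lift_apply_of, gens_inl, gens_inl, ← map_mul]
      rfl
    · rw [dif_neg h, dif_neg (fun hc => absurd ((Pb_false_iff _).mp hc.2)
          (fun hlt => h (by omega))), add_zero]
      unfold S
      first
      | rfl
      | (rw [FreeGroup.lift_apply_of, gens_inl])

/-- The homomorphism from the presented group to the concrete model. -/
noncomputable def piH : PresentedGroup (rels k) →* Hgrp k :=
  PresentedGroup.toGroup rels_check

/-- Direct evaluation of a word in the concrete model. -/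
noncomputable def evalH (u : List (Gen12 k × Bool)) : Hgrp k :=
  (u.map fun p => if p.2 then gens p.1 else (gens p.1)⁻¹).prod

lemma evalH_nil : evalH ([] : List (Gen12 k × Bool)) = 1 := rfl

lemma evalH_cons (p : Gen12 k × Bool) (u : List (Gen12 k × Bool)) :
    evalH (p :: u) = (if p.2 then gens p.1 else (gens p.1)⁻¹) * evalH u := by
  unfold evalH
  rw [List.map_cons, List.prod_cons]

lemma evalH_append (u v : List (Gen12 k × Bool)) :
    evalH (u ++ v) = evalH u * evalH v := by
  unfold evalH
  rw [List.map_append, List.prod_append]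

lemma eval_cons (p : Gen12 k × Bool) (u : List (Gen12 k × Bool)) :
    eval (p :: u) = (if p.2 then (PresentedGroup.of p.1 : PresentedGroup (rels k))
      else (PresentedGroup.of p.1)⁻¹) * eval u := by
  unfold eval
  rw [List.map_cons, List.prod_cons]

lemma piH_eval (u : List (Gen12 k × Bool)) : piH (eval u) = evalH u := by
  induction u with
  | nil => simp [eval, evalH]
  | cons p u ih =>
    rw [eval_cons, map_mul, ih, evalH_cons]
    congr 1
    by_cases h : p.2 <;> simp [h, piH, PresentedGroup.toGroup.of]

lemma occ_cons (y : Gen12 k) (ε : Bool) (u : List (Gen12 k × Bool)) (x : Gen12 k) :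
    occ ((y, ε) :: u) x = (if y = x then 1 else 0) + occ u x := by
  by_cases h : y = x <;> simp [occ, List.filter_cons, h, add_comm]

lemma occ_append (u v : List (Gen12 k × Bool)) (x : Gen12 k) :
    occ (u ++ v) x = occ u x + occ v x := by
  simp [occ, List.filter_append]

end St12Aux

namespace St12Aux
open Stmt12 Multiplicative

variable {k : ℕ}

lemma s_right (i0 : Fin k) (ε : Bool) :
    ((if ε = true then gens (Sum.inl i0) else (gens (Sum.inl i0))⁻¹) : Hgrp k).right = 1 := by
  cases ε
  · rw [if_neg (by simp), gens_inl, ← map_inv]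
    exact SemidirectProduct.right_inl _
  · rw [if_pos rfl, gens_inl]
    exact SemidirectProduct.right_inl _

lemma right_norm_le : ∀ u : List (Gen12 k × Bool),
    FreeGroup.norm (evalH u).right ≤ occ u (Sum.inr true) + occ u (Sum.inr false) := by
  intro u
  induction u with
  | nil =>
    rw [evalH_nil]
    show FreeGroup.norm (1 : FreeGroup Bool) ≤ _
    rw [FreeGroup.norm_one]
    exact Nat.zero_le _
  | cons p u ih =>
    rw [evalH_cons, SemidirectProduct.mul_right]
    refine le_trans (FreeGroup.norm_mul_le _ _) ?_
    rcases p with ⟨x, ε⟩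
    rcases x with i0 | b
    · rw [s_right, FreeGroup.norm_one, occ_cons, occ_cons]
      rw [if_neg (show ¬((Sum.inl i0 : Gen12 k) = Sum.inr true) by simp),
        if_neg (show ¬((Sum.inl i0 : Gen12 k) = Sum.inr false) by simp)]
      omega
    · have h1 : ((if ε = true then gens (Sum.inr b) else (gens (Sum.inr b))⁻¹) : Hgrp k).right
          = (if ε = true then FreeGroup.of b else (FreeGroup.of b)⁻¹) := by
        cases ε
        · rw [if_neg (by simp), if_neg (by simp), gens_inr, ← map_inv]
          exact SemidirectProduct.right_inr _
        · rw [if_pos rfl, if_pos rfl, gens_inr]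
          exact SemidirectProduct.right_inr _
      have h2 : FreeGroup.norm
          ((if ε = true then FreeGroup.of b else (FreeGroup.of b)⁻¹) : FreeGroup Bool) = 1 := by
        cases ε
        · rw [if_neg (by simp), FreeGroup.norm_inv_eq, FreeGroup.norm_of]
        · rw [if_pos rfl, FreeGroup.norm_of]
      rw [h1, h2, occ_cons, occ_cons]
      cases b
      · rw [if_neg (show ¬((Sum.inr false : Gen12 k) = Sum.inr true) by simp), if_pos rfl]
        omega
      · rw [if_pos rfl, if_neg (show ¬((Sum.inr true : Gen12 k) = Sum.inr false) by simp)]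
        omega

lemma core : ∀ (u : List (Gen12 k × Bool)) (w : FreeGroup Bool) (c : ℕ),
    (∀ p, p ≤ u.length → FreeGroup.norm (w * (evalH (u.take p)).right) ≤ c) →
    ∀ j : Fin k, |act w (toAdd (evalH u).left) j|
      ≤ ((∑ i : Fin k, bndN c (i:ℕ) (j:ℕ) * occ u (Sum.inl i) : ℕ) : ℤ) := by
  intro u
  induction u with
  | nil =>
    intro w c _ j
    rw [evalH_nil]
    show |act w (toAdd (1 : Multiplicative (V k))) j| ≤ _
    rw [show toAdd (1 : Multiplicative (V k)) = (0 : V k) from rfl, act_zero]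
    have : |(0 : V k) j| = 0 := by rw [Pi.zero_apply, abs_zero]
    rw [this]
    exact Int.ofNat_nonneg _
  | cons p u ih =>
    intro w c hyp j
    rcases p with ⟨x, ε⟩
    rcases x with i0 | b
    · -- s-letter case
      have hnw : FreeGroup.norm w ≤ c := by
        have h0 := hyp 0 (Nat.zero_le _)
        rw [List.take_zero, evalH_nil] at h0
        rw [show ((1 : Hgrp k)).right = 1 from rfl, mul_one] at h0
        exact h0
      have hsingle : |act w (Pi.single i0 1) j| ≤ (bndN c (i0:ℕ) (j:ℕ) : ℤ) := by
        have h1 := act_word_bound (w.toWord) i0 j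
        rw [FreeGroup.mk_toWord] at h1
        refine le_trans h1 ?_
        exact_mod_cast bndN_mono hnw (i0:ℕ) (j:ℕ)
      have hyp' : ∀ p, p ≤ u.length → FreeGroup.norm (w * (evalH (u.take p)).right) ≤ c := by
        intro p hp
        have h2 := hyp (p+1) (by rw [List.length_cons]; omega)
        rw [List.take_succ_cons, evalH_cons, SemidirectProduct.mul_right, s_right, one_mul] at h2
        exact h2
      have ihu := ih w c hyp' j
      have hstep : |act w (toAdd (evalH ((Sum.inl i0, ε) :: u)).left) j|
          ≤ |act w (Pi.single i0 1) j| + |act w (toAdd (evalH u).left) j| := by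
        cases ε
        · have hl : toAdd (evalH ((Sum.inl i0, false) :: u)).left
              = -Pi.single i0 1 + toAdd (evalH u).left := by
            rw [evalH_cons, if_neg (by simp), gens_inl, ← map_inv,
              SemidirectProduct.mul_left, SemidirectProduct.right_inl, map_one,
              SemidirectProduct.left_inl, MulAut.one_apply]
            rfl
          rw [hl, act_add, act_neg, Pi.add_apply]
          refine le_trans (abs_add_le _ _) ?_
          rw [Pi.neg_apply, abs_neg]
        · have hl : toAdd (evalH ((Sum.inl i0, true) :: u)).left
              = Pi.single i0 1 + toAdd (evalH u).left := by
            rw [evalH_cons, if_pos rfl, gens_inl,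
              SemidirectProduct.mul_left, SemidirectProduct.right_inl, map_one,
              SemidirectProduct.left_inl, MulAut.one_apply]
            rfl
          rw [hl, act_add, Pi.add_apply]
          exact abs_add_le _ _
      have harith : (∑ i : Fin k, bndN c (i:ℕ) (j:ℕ) * occ ((Sum.inl i0, ε) :: u) (Sum.inl i))
          = bndN c (i0:ℕ) (j:ℕ) + ∑ i : Fin k, bndN c (i:ℕ) (j:ℕ) * occ u (Sum.inl i) := by
        have step : ∀ i : Fin k, bndN c (i:ℕ) (j:ℕ) * occ ((Sum.inl i0, ε) :: u) (Sum.inl i)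
            = (if i = i0 then bndN c (i:ℕ) (j:ℕ) else 0)
              + bndN c (i:ℕ) (j:ℕ) * occ u (Sum.inl i) := by
          intro i
          rw [occ_cons, mul_add]
          congr 1
          by_cases h : i = i0
          · rw [if_pos (by rw [h]), if_pos h, mul_one]
          · rw [if_neg (fun hh => h (by injection hh with h'; exact h'.symm)), if_neg h, mul_zero]
        rw [Finset.sum_congr rfl fun i _ => step i, Finset.sum_add_distrib,
          Finset.sum_ite_eq' Finset.univ i0 fun i => bndN c (i:ℕ) (j:ℕ),
          if_pos (Finset.mem_univ i0)]
      rw [harith]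
      push_cast
      refine le_trans hstep ?_
      have := add_le_add hsingle ihu
      refine le_trans this ?_
      push_cast
      exact le_refl _
    · -- F-letter case
      have general : ∀ β : FreeGroup Bool,
          (∀ p, p ≤ u.length → FreeGroup.norm (w * β * (evalH (u.take p)).right) ≤ c) →
          toAdd (evalH ((Sum.inr b, ε) :: u)).left = act β (toAdd (evalH u).left) →
          |act w (toAdd (evalH ((Sum.inr b, ε) :: u)).left) j|
            ≤ ((∑ i : Fin k, bndN c (i:ℕ) (j:ℕ) * occ ((Sum.inr b, ε) :: u) (Sum.inl i) : ℕ) : ℤ) := by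
        intro β hyp' hl
        rw [hl, act_comp]
        refine le_trans (ih (w * β) c hyp' j) ?_
        have hocc : ∀ i : Fin k, occ ((Sum.inr b, ε) :: u) (Sum.inl i) = occ u (Sum.inl i) := by
          intro i
          rw [occ_cons, if_neg (by simp), zero_add]
        have hs : (∑ i : Fin k, bndN c (i:ℕ) (j:ℕ) * occ ((Sum.inr b, ε) :: u) (Sum.inl i))
            = ∑ i : Fin k, bndN c (i:ℕ) (j:ℕ) * occ u (Sum.inl i) :=
          Finset.sum_congr rfl fun i _ => by rw [hocc i]
        rw [hs]
      cases ε
      · refine general (FreeGroup.of b)⁻¹ ?_ ?_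
        · intro p hp
          have h2 := hyp (p+1) (by rw [List.length_cons]; omega)
          rw [List.take_succ_cons, evalH_cons, SemidirectProduct.mul_right, if_neg (by simp),
            gens_inr, ← map_inv, SemidirectProduct.right_inr, ← mul_assoc] at h2
          exact h2
        · rw [evalH_cons, if_neg (by simp), gens_inr, ← map_inv,
            SemidirectProduct.mul_left, SemidirectProduct.right_inr,
            SemidirectProduct.left_inr, one_mul]
          unfold act
          rw [ofAdd_toAdd]
      · refine general (FreeGroup.of b) ?_ ?_
        · intro p hp
          have h2 := hyp (p+1) (by rw [List.length_cons]; omega)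
          rw [List.take_succ_cons, evalH_cons, SemidirectProduct.mul_right, if_pos rfl,
            gens_inr, SemidirectProduct.right_inr, ← mul_assoc] at h2
          exact h2
        · rw [evalH_cons, if_pos rfl, gens_inr,
            SemidirectProduct.mul_left, SemidirectProduct.right_inr,
            SemidirectProduct.left_inr, one_mul]
          unfold act
          rw [ofAdd_toAdd]

lemma bnd_final (hk : 1 ≤ k) (c : ℕ) (i : Fin k) :
    bndN c (i:ℕ) (k-1) ≤ (c + k - 1 - ((i:ℕ)+1)).choose (c-1) := by
  have hi := i.isLt
  unfold bndN
  rcases c with _ | c'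
  · by_cases h : (i:ℕ) ≤ k - 1
    · rw [if_pos h]
      by_cases h2 : (i:ℕ) = k - 1
      · rw [show k - 1 - (i:ℕ) = 0 by omega]
        simp
      · have hz : (k - 1 - (i:ℕ) + 0 - 1).choose (k - 1 - (i:ℕ)) = 0 :=
          Nat.choose_eq_zero_of_lt (by omega)
        rw [hz]
        exact Nat.zero_le _
    · rw [if_neg h]
      exact Nat.zero_le _
  · rw [if_pos (by omega)]
    have e1 : k - 1 - (i:ℕ) + (c'+1) - 1 = c' + (k - 1 - (i:ℕ)) := by omega
    have e2 : c' + 1 + k - 1 - ((i:ℕ)+1) = c' + (k - 1 - (i:ℕ)) := by omega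
    rw [e1, e2, Nat.succ_sub_one]
    have hs := Nat.choose_symm (show c' ≤ c' + (k-1-(i:ℕ)) by omega)
    rw [show c' + (k-1-(i:ℕ)) - c' = k-1-(i:ℕ) by omega] at hs
    exact le_of_eq hs

end St12Aux


open Stmt12 in
/-- if a word `u₀` in the generators of `Θ_k = ℤᵏ ⋊ F₂` represents
`s_k^m`, and `c` is half the number of occurrences of `f^{±1}` and `g^{±1}` in `u₀`,
then `|m| ≤ ∑_{i=1}^{k} C(c + k - 1 - i, c - 1) · ℓ_{s_i}(u₀)`. -/
theorem stmt12 (k : ℕ) (hk : 1 ≤ k) (m : ℤ) (u₀ : List (Gen12 k × Bool))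
    (heval : eval u₀
      = (PresentedGroup.of (Sum.inl ⟨k - 1, by omega⟩) : PresentedGroup (rels k)) ^ m)
    (c : ℕ) (hc : c = (occ u₀ (Sum.inr true) + occ u₀ (Sum.inr false)) / 2) :
    m.natAbs ≤ ∑ i : Fin k,
      (c + k - 1 - ((i : ℕ) + 1)).choose (c - 1) * occ u₀ (Sum.inl i) := by
  classical
  have hπ := congrArg St12Aux.piH heval
  rw [St12Aux.piH_eval, map_zpow] at hπ
  have hof : (St12Aux.piH (PresentedGroup.of (Sum.inl ⟨k - 1, by omega⟩))
      : St12Aux.Hgrp k) = SemidirectProduct.inl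
        (Multiplicative.ofAdd (Pi.single (⟨k - 1, by omega⟩ : Fin k) 1)) := by
    rw [show (St12Aux.piH (PresentedGroup.of (Sum.inl (⟨k - 1, by omega⟩ : Fin k))))
        = St12Aux.gens (Sum.inl ⟨k - 1, by omega⟩) from PresentedGroup.toGroup.of _,
      St12Aux.gens_inl]
  rw [hof, ← map_zpow] at hπ
  have hleft : Multiplicative.toAdd (St12Aux.evalH u₀).left
      = m • Pi.single (⟨k - 1, by omega⟩ : Fin k) (1:ℤ) := by
    rw [hπ, SemidirectProduct.left_inl, toAdd_zpow, toAdd_ofAdd]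
  have hright : (St12Aux.evalH u₀).right = 1 := by
    rw [hπ, SemidirectProduct.right_inl]
  have hT : ∀ p, p ≤ u₀.length →
      FreeGroup.norm ((1 : FreeGroup Bool) * (St12Aux.evalH (u₀.take p)).right) ≤ c := by
    intro p hp
    rw [one_mul]
    have hsplit : (St12Aux.evalH (u₀.take p)).right * (St12Aux.evalH (u₀.drop p)).right = 1 := by
      rw [← SemidirectProduct.mul_right, ← St12Aux.evalH_append, List.take_append_drop, hright]
    have h1 : FreeGroup.norm (St12Aux.evalH (u₀.take p)).right
        ≤ occ (u₀.take p) (Sum.inr true) + occ (u₀.take p) (Sum.inr false) :=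
      St12Aux.right_norm_le _
    have hb : (St12Aux.evalH (u₀.drop p)).right = ((St12Aux.evalH (u₀.take p)).right)⁻¹ :=
      eq_inv_of_mul_eq_one_right hsplit
    have h3 := St12Aux.right_norm_le (k := k) (u₀.drop p)
    rw [hb, FreeGroup.norm_inv_eq] at h3
    have h4 : occ (u₀.take p) (Sum.inr true) + occ (u₀.drop p) (Sum.inr true)
        = occ u₀ (Sum.inr true) := by
      rw [← St12Aux.occ_append, List.take_append_drop]
    have h5 : occ (u₀.take p) (Sum.inr false) + occ (u₀.drop p) (Sum.inr false)
        = occ u₀ (Sum.inr false) := by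
      rw [← St12Aux.occ_append, List.take_append_drop]
    omega
  have hfin := St12Aux.core u₀ 1 c hT ⟨k - 1, by omega⟩
  rw [St12Aux.act_one, hleft] at hfin
  have hcoord : ((m • Pi.single (⟨k - 1, by omega⟩ : Fin k) (1:ℤ) : St12Aux.V k))
      ⟨k - 1, by omega⟩ = m := by
    rw [Pi.smul_apply, Pi.single_eq_same, smul_eq_mul, mul_one]
  rw [hcoord] at hfin
  have hnat : m.natAbs ≤ ∑ i : Fin k,
      St12Aux.bndN c (i:ℕ) ((⟨k - 1, by omega⟩ : Fin k) : ℕ) * occ u₀ (Sum.inl i) := by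
    rw [Int.abs_eq_natAbs] at hfin
    exact_mod_cast hfin
  refine le_trans hnat (Finset.sum_le_sum fun i _ => Nat.mul_le_mul_right _ ?_)
  exact St12Aux.bnd_final hk c i
end

section
/- Let F_k ⋊ ℤ = ⟨s₁, …, s_k, f | f⁻¹ s_k f = s_k; f⁻¹ s_i f = s_i s_{i+1} for i < k⟩. For every natural number n there exists a positive word w_n in the letters s₁, …, s_k such that w_n = f⁻ⁿ s₁ⁿ fⁿ in F_k ⋊ ℤ. -/
/-- The defining relators of `F_k ⋊ ℤ = ⟨s₁, …, s_k, f ∣ f⁻¹ s_k f = s_k;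
f⁻¹ s_i f = s_i s_{i+1} for i < k⟩`; `Sum.inl i` is `s_{i+1}` and `Sum.inr ()` is `f`. -/
def rels13 (k : ℕ) : Set (FreeGroup (Fin k ⊕ Unit)) :=
  {x | ∃ i : Fin k,
    x = (FreeGroup.of (Sum.inr ()))⁻¹ * FreeGroup.of (Sum.inl i) * FreeGroup.of (Sum.inr ()) *
      (if h : (i : ℕ) + 1 < k then
          FreeGroup.of (Sum.inl i) * FreeGroup.of (Sum.inl ⟨(i : ℕ) + 1, h⟩)
        else FreeGroup.of (Sum.inl i))⁻¹}

/-! The automorphism `x ↦ f⁻¹ x f` sends every generator `s_i` to a positive word, so it preserves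
the submonoid of positive words; hence so does its `n`-th power `x ↦ f⁻ⁿ x fⁿ`, and `f⁻ⁿ s₁ⁿ fⁿ`
is the image of the positive word `s₁ⁿ`. -/

open Submonoid

section Conjugation

variable {G : Type*} [Group G] {S : Set G} {g : G}

theorem conj_mem_closure_of_forall_mem (hS : ∀ s ∈ S, g⁻¹ * s * g ∈ closure S) {x : G}
    (hx : x ∈ closure S) : g⁻¹ * x * g ∈ closure S := by
  induction hx using closure_induction with
  | mem s hs => exact hS s hs
  | one => simp
  | mul x y _ _ hx hy =>
    have hconj : g⁻¹ * (x * y) * g = (g⁻¹ * x * g) * (g⁻¹ * y * g) := by group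
    exact hconj ▸ mul_mem hx hy

theorem conj_pow_mem_closure_of_forall_mem (hS : ∀ s ∈ S, g⁻¹ * s * g ∈ closure S) {x : G}
    (hx : x ∈ closure S) (n : ℕ) : (g ^ n)⁻¹ * x * g ^ n ∈ closure S := by
  induction n with
  | zero => simpa using hx
  | succ n ih =>
    have hconj : (g ^ (n + 1))⁻¹ * x * g ^ (n + 1) = g⁻¹ * ((g ^ n)⁻¹ * x * g ^ n) * g := by
      group
    exact hconj ▸ conj_mem_closure_of_forall_mem hS ih

end Conjugation

theorem exists_list_map_prod_eq_of_mem_closure_range {M ι : Type*} [Monoid M] {f : ι → M}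
    {x : M} (hx : x ∈ closure (Set.range f)) : ∃ w : List ι, (w.map f).prod = x := by
  rw [← FreeMonoid.mrange_lift] at hx
  obtain ⟨w, rfl⟩ := hx
  exact ⟨w.toList, (FreeMonoid.lift_apply f w).symm⟩

section SemidirectProduct

open PresentedGroup

variable (k : ℕ)

theorem rels13_stable_inv_mul_gen_mul_stable (i : Fin k) :
    (of (Sum.inr ()) : PresentedGroup (rels13 k))⁻¹ * of (Sum.inl i) * of (Sum.inr ()) =
      if h : (i : ℕ) + 1 < k then of (Sum.inl i) * of (Sum.inl ⟨(i : ℕ) + 1, h⟩)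
      else of (Sum.inl i) := by
  have hrel := mk_eq_mk_of_mul_inv_mem (show _ ∈ rels13 k from ⟨i, rfl⟩)
  split_ifs at hrel ⊢ <;> simp only [map_mul, map_inv] at hrel <;> exact hrel

theorem rels13_gen_mem_closure_gens (i : Fin k) :
    (of (Sum.inl i) : PresentedGroup (rels13 k)) ∈ closure (Set.range fun j => of (Sum.inl j)) :=
  subset_closure ⟨i, rfl⟩

theorem rels13_stable_conj_mem_closure_gens (s : PresentedGroup (rels13 k))
    (hs : s ∈ Set.range fun i => of (Sum.inl i)) :
    (of (Sum.inr ()))⁻¹ * s * of (Sum.inr ()) ∈ closure (Set.range fun i => of (Sum.inl i)) := by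
  obtain ⟨i, rfl⟩ := hs
  have hgen := rels13_gen_mem_closure_gens k
  rw [rels13_stable_inv_mul_gen_mul_stable]
  split_ifs
  · exact mul_mem (hgen _) (hgen _)
  · exact hgen _

end SemidirectProduct

/-- in `F_k ⋊ ℤ`, for every `n` the element `f⁻ⁿ s₁ⁿ fⁿ` is equal to a
positive word in the letters `s₁, …, s_k`. -/
theorem stmt13 (k : ℕ) (hk : 1 ≤ k) (n : ℕ) :
    ∃ w : List (Fin k),
      (w.map fun i => (PresentedGroup.of (Sum.inl i) : PresentedGroup (rels13 k))).prod
        = ((PresentedGroup.of (Sum.inr ()) : PresentedGroup (rels13 k)) ^ n)⁻¹ *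
            (PresentedGroup.of (Sum.inl ⟨0, hk⟩) : PresentedGroup (rels13 k)) ^ n *
            (PresentedGroup.of (Sum.inr ()) : PresentedGroup (rels13 k)) ^ n :=
  exists_list_map_prod_eq_of_mem_closure_range <|
    conj_pow_mem_closure_of_forall_mem (rels13_stable_conj_mem_closure_gens k)
      (pow_mem (rels13_gen_mem_closure_gens k ⟨0, hk⟩) n) n
end

section
/- Let φ be the automorphism of the free group F_m on a₁, …, a_m defined by φ(a_m) = a_m and φ(a_i) = a_i a_{i+1} for i < m. Then φ has polynomial growth of degree m-1: there is a constant C such that for all n ≥ 1 and every generator a_i, the word length of φⁿ(a_i) in F_m is at most C·n^{m-1}, and the word length of φⁿ(a₁) is at least n^{m-1}/C. -/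
/-- The automorphism of the free group `F_m` with `φ(a_i) = a_i a_{i+1}` for `i < m`
and `φ(a_m) = a_m` (as an endomorphism of the free group). -/
def phi14 (m : ℕ) : FreeGroup (Fin m) →* FreeGroup (Fin m) :=
  FreeGroup.lift fun i =>
    if h : (i : ℕ) + 1 < m then FreeGroup.of i * FreeGroup.of ⟨(i : ℕ) + 1, h⟩
    else FreeGroup.of i

namespace Stmt14Aux

variable {m : ℕ}

/-- one step of the substitution, on letters -/
def step (j : Fin m) : List (Fin m) :=
  if h : (j : ℕ) + 1 < m then [j, ⟨(j : ℕ) + 1, h⟩] else [j]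

/-- the positive word representing `φⁿ(a_i)` -/
def word (i : Fin m) : ℕ → List (Fin m)
  | 0 => [i]
  | n + 1 => (word i n).flatMap step

/-- product of positive letters -/
def P (L : List (Fin m)) : FreeGroup (Fin m) :=
  (L.map FreeGroup.of).prod

@[simp] lemma P_nil : P ([] : List (Fin m)) = 1 := rfl

@[simp] lemma P_cons (x : Fin m) (L : List (Fin m)) :
    P (x :: L) = FreeGroup.of x * P L := by simp [P]

@[simp] lemma P_append (L₁ L₂ : List (Fin m)) : P (L₁ ++ L₂) = P L₁ * P L₂ := by
  simp [P]

lemma phi_of (j : Fin m) : phi14 m (FreeGroup.of j) = P (step j) := by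
  simp only [phi14, FreeGroup.lift_apply_of, step]
  split <;> simp

lemma phi_P (L : List (Fin m)) : phi14 m (P L) = P (L.flatMap step) := by
  induction L with
  | nil => simp
  | cons x L ih => simp [List.flatMap_cons, map_mul, phi_of, ih]

lemma iter_eq (i : Fin m) (n : ℕ) :
    (⇑(phi14 m))^[n] (FreeGroup.of i) = P (word i n) := by
  induction n with
  | zero => simp [word, P]
  | succ n ih =>
    rw [Function.iterate_succ_apply', ih, phi_P]
    rfl

lemma P_eq_mk (L : List (Fin m)) :
    P L = FreeGroup.mk (L.map fun j => (j, true)) := by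
  induction L with
  | nil => rfl
  | cons x L ih =>
    rw [P_cons, ih]
    show FreeGroup.mk [(x, true)] * _ = _
    rw [FreeGroup.mul_mk]
    rfl

lemma reduce_of_all_true (L : List (Fin m × Bool)) (h : ∀ p ∈ L, p.2 = true) :
    FreeGroup.reduce L = L := by
  induction L with
  | nil => rfl
  | cons x L ih =>
    have hx : x.2 = true := h x (by simp)
    have hL : FreeGroup.reduce L = L := ih fun p hp => h p (by simp [hp])
    rw [FreeGroup.reduce.cons, hL]
    cases L with
    | nil => rfl
    | cons y t =>
      have hy : y.2 = true := h y (by simp)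
      simp [hx, hy]

lemma toWord_P (L : List (Fin m)) :
    (P L).toWord = L.map fun j => (j, true) := by
  rw [P_eq_mk, FreeGroup.toWord_mk]
  exact reduce_of_all_true _ (by simp)

lemma length_toWord_P (L : List (Fin m)) : (P L).toWord.length = L.length := by
  rw [toWord_P, List.length_map]

/-- count of letters with value `k` -/
def cnt (L : List (Fin m)) (k : ℕ) : ℕ := L.countP fun j => decide ((j : ℕ) = k)

@[simp] lemma cnt_nil (k : ℕ) : cnt ([] : List (Fin m)) k = 0 := rfl

lemma cnt_cons (x : Fin m) (L : List (Fin m)) (k : ℕ) :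
    cnt (x :: L) k = cnt L k + (if (x : ℕ) = k then 1 else 0) := by
  simp [cnt, List.countP_cons]

lemma cnt_append (L₁ L₂ : List (Fin m)) (k : ℕ) :
    cnt (L₁ ++ L₂) k = cnt L₁ k + cnt L₂ k := by
  simp [cnt, List.countP_append]

lemma cnt_step (x : Fin m) (k : ℕ) :
    cnt (step x) k
      = (if (x : ℕ) = k then 1 else 0)
        + (if (x : ℕ) + 1 = k ∧ (x : ℕ) + 1 < m then 1 else 0) := by
  unfold step
  by_cases h : (x : ℕ) + 1 < m
  · rw [dif_pos h]
    simp only [cnt_cons, cnt_nil, Fin.val_mk, h, and_true]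
    by_cases h1 : (x : ℕ) = k <;> by_cases h2 : (x : ℕ) + 1 = k <;>
      simp [h1, h2] <;> omega
  · rw [dif_neg h]
    simp only [cnt_cons, cnt_nil, h, and_false, if_false]
    by_cases h1 : (x : ℕ) = k <;> simp [h1]

lemma cnt_flatMap_zero (L : List (Fin m)) :
    cnt (L.flatMap step) 0 = cnt L 0 := by
  induction L with
  | nil => rfl
  | cons x L ih =>
    rw [List.flatMap_cons, cnt_append, ih, cnt_cons, cnt_step]
    simp only [Nat.succ_ne_zero, false_and, if_false, add_zero]
    exact Nat.add_comm _ _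

lemma cnt_flatMap_succ (L : List (Fin m)) (k : ℕ) (hk : k + 1 < m) :
    cnt (L.flatMap step) (k + 1) = cnt L (k + 1) + cnt L k := by
  induction L with
  | nil => rfl
  | cons x L ih =>
    rw [List.flatMap_cons, cnt_append, ih, cnt_cons, cnt_cons, cnt_step]
    have hiff : ((x : ℕ) + 1 = k + 1 ∧ (x : ℕ) + 1 < m) ↔ (x : ℕ) = k := by
      constructor
      · rintro ⟨h1, _⟩; omega
      · intro h1; omega
    rw [if_congr hiff rfl rfl]
    ring

lemma cnt_word (i : Fin m) (n k : ℕ) (hk : k < m) :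
    cnt (word i n) k = if (i : ℕ) ≤ k then n.choose (k - (i : ℕ)) else 0 := by
  induction n generalizing k with
  | zero =>
    show cnt [i] k = _
    rw [cnt_cons, cnt_nil]
    rcases Nat.lt_trichotomy (i : ℕ) k with h | h | h
    · have : ¬ (i : ℕ) = k := by omega
      simp only [this, if_false, Nat.zero_add, if_pos (le_of_lt h)]
      rw [Nat.choose_eq_zero_of_lt (by omega)]
    · simp [h]
    · have h1 : ¬ (i : ℕ) = k := by omega
      have h2 : ¬ (i : ℕ) ≤ k := by omega
      simp [h1, h2]
  | succ n ih =>
    show cnt ((word i n).flatMap step) k = _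
    cases k with
    | zero =>
      rw [cnt_flatMap_zero, ih 0 hk]
      by_cases h : (i : ℕ) ≤ 0
      · have h2 : 0 - (i : ℕ) = 0 := by omega
        simp [h, h2]
      · simp [h]
    | succ k =>
      rw [cnt_flatMap_succ _ _ hk, ih (k+1) hk, ih k (by omega)]
      rcases Nat.lt_trichotomy (i : ℕ) (k+1) with h | h | h
      · have h1 : (i : ℕ) ≤ k + 1 := le_of_lt h
        have h2 : (i : ℕ) ≤ k := by omega
        have h3 : k + 1 - (i : ℕ) = (k - (i : ℕ)) + 1 := by omega
        simp only [h1, h2, if_true, h3, Nat.choose_succ_succ, Nat.succ_eq_add_one]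
        omega
      · have h2 : ¬ (i : ℕ) ≤ k := by omega
        simp [h, h2]
      · have h1 : ¬ (i : ℕ) ≤ k + 1 := by omega
        have h2 : ¬ (i : ℕ) ≤ k := by omega
        simp [h1, h2]

lemma length_eq_sum_cnt (L : List (Fin m)) :
    L.length = ∑ k ∈ Finset.range m, cnt L k := by
  induction L with
  | nil => simp
  | cons x L ih =>
    simp only [List.length_cons, ih, cnt_cons, Finset.sum_add_distrib]
    have : ∑ k ∈ Finset.range m, (if (x : ℕ) = k then 1 else 0) = 1 := by
      rw [Finset.sum_ite_eq (Finset.range m) (x : ℕ) (fun _ => 1)]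
      simp [x.isLt]
    omega

lemma length_word (i : Fin m) (n : ℕ) :
    (word i n).length
      = ∑ k ∈ Finset.range m, (if (i : ℕ) ≤ k then n.choose (k - (i : ℕ)) else 0) := by
  rw [length_eq_sum_cnt]
  exact Finset.sum_congr rfl fun k hk => cnt_word i n k (Finset.mem_range.mp hk)

end Stmt14Aux

/-- `φ` has polynomial growth of degree `m - 1`: for some `C > 0`,
`|φⁿ(a_i)| ≤ C n^(m-1)` for every generator `a_i`, and `|φⁿ(a₁)| ≥ n^(m-1)/C`. -/
theorem stmt14 (m : ℕ) (hm : 1 ≤ m) :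
    ∃ C : ℕ, 0 < C ∧ ∀ n : ℕ, 1 ≤ n →
      (∀ i : Fin m,
        ((⇑(phi14 m))^[n] (FreeGroup.of i)).toWord.length ≤ C * n ^ (m - 1)) ∧
      n ^ (m - 1) ≤ C * ((⇑(phi14 m))^[n] (FreeGroup.of ⟨0, hm⟩)).toWord.length := by
  classical
  refine ⟨(2 * m) ^ m * m.factorial, by positivity, fun n hn => ?_⟩
  have key : ∀ i : Fin m,
      ((⇑(phi14 m))^[n] (FreeGroup.of i)).toWord.length
        = ∑ k ∈ Finset.range m, (if (i : ℕ) ≤ k then n.choose (k - (i : ℕ)) else 0) := by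
    intro i
    rw [Stmt14Aux.iter_eq, Stmt14Aux.length_toWord_P, Stmt14Aux.length_word]
  have hC1 : m ≤ (2 * m) ^ m * m.factorial := by
    calc m ≤ (2 * m) ^ m := by
          calc m ≤ 2 * m := by omega
          _ = (2 * m) ^ 1 := (pow_one _).symm
          _ ≤ (2 * m) ^ m := Nat.pow_le_pow_right (by omega) hm
      _ ≤ (2 * m) ^ m * m.factorial :=
          Nat.le_mul_of_pos_right _ m.factorial_pos
  constructor
  · -- upper bound
    intro i
    rw [key i]
    calc ∑ k ∈ Finset.range m, (if (i : ℕ) ≤ k then n.choose (k - (i : ℕ)) else 0)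
        ≤ ∑ _k ∈ Finset.range m, n ^ (m - 1) := by
          apply Finset.sum_le_sum
          intro k hk
          split
          · calc n.choose (k - (i : ℕ)) ≤ n ^ (k - (i : ℕ)) := Nat.choose_le_pow _ _
              _ ≤ n ^ (m - 1) := Nat.pow_le_pow_right hn
                  (by have := Finset.mem_range.mp hk; omega)
          · positivity
      _ = m * n ^ (m - 1) := by rw [Finset.sum_const, Finset.card_range, smul_eq_mul]
      _ ≤ (2 * m) ^ m * m.factorial * n ^ (m - 1) :=
          Nat.mul_le_mul_right _ hC1
  · -- lower bound
    rw [key ⟨0, hm⟩]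
    have h0 : ((⟨0, hm⟩ : Fin m) : ℕ) = 0 := rfl
    rw [h0]
    simp only [Nat.zero_le, if_true, Nat.sub_zero]
    set S := ∑ k ∈ Finset.range m, n.choose k with hS
    have hterm : ∀ k, k < m → n.choose k ≤ S := by
      intro k hk
      exact Finset.single_le_sum (f := fun k => n.choose k)
        (fun _ _ => Nat.zero_le _) (Finset.mem_range.mpr hk)
    have hS1 : 1 ≤ S := by
      have := hterm 0 (by omega)
      simpa using this
    by_cases hsmall : n ≤ 2 * m
    · calc n ^ (m - 1) ≤ (2 * m) ^ (m - 1) := Nat.pow_le_pow_left hsmall _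
        _ ≤ (2 * m) ^ m := Nat.pow_le_pow_right (by omega) (by omega)
        _ ≤ (2 * m) ^ m * m.factorial * 1 := by
            rw [mul_one]
            exact Nat.le_mul_of_pos_right _ m.factorial_pos
        _ ≤ (2 * m) ^ m * m.factorial * S := Nat.mul_le_mul_left _ hS1
    · push_neg at hsmall
      have hchoose : (n + 1 - (m - 1)) ^ (m - 1) ≤ (m - 1).factorial * n.choose (m - 1) := by
        rw [← Nat.descFactorial_eq_factorial_mul_choose]
        exact Nat.pow_sub_le_descFactorial n (m - 1)
      have hhalf : n ≤ 2 * (n + 1 - (m - 1)) := by omega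
      calc n ^ (m - 1) ≤ (2 * (n + 1 - (m - 1))) ^ (m - 1) :=
            Nat.pow_le_pow_left hhalf _
        _ = 2 ^ (m - 1) * (n + 1 - (m - 1)) ^ (m - 1) := mul_pow _ _ _
        _ ≤ 2 ^ (m - 1) * ((m - 1).factorial * n.choose (m - 1)) :=
            Nat.mul_le_mul_left _ hchoose
        _ = 2 ^ (m - 1) * (m - 1).factorial * n.choose (m - 1) := (mul_assoc _ _ _).symm
        _ ≤ (2 * m) ^ m * m.factorial * n.choose (m - 1) := by
            apply Nat.mul_le_mul_right
            apply Nat.mul_le_mul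
            · calc 2 ^ (m - 1) ≤ (2 * m) ^ (m - 1) :=
                  Nat.pow_le_pow_left (by omega) _
                _ ≤ (2 * m) ^ m := Nat.pow_le_pow_right (by omega) (by omega)
            · exact Nat.factorial_le (by omega)
        _ ≤ (2 * m) ^ m * m.factorial * S :=
            Nat.mul_le_mul_left _ (hterm (m - 1) (by omega))
end
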